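/- arXiv:1808.02120 — 2 statements merged into one kernel-verified Lean document; each statement's English description precedes it below -/
import Mathlib

section
/- Let S be a K×K real matrix that is block diagonal with blocks S^{(b)}, 1 ≤ b ≤ B, where each block S^{(b)} is a bidiagonal matrix with all diagonal entries equal to −μ_b and all superdiagonal entries equal to μ_b, for distinct positive reals μ_1, …, μ_B. Then every eigenvector v of Sᵀ satisfies vᵀ1 ≠ 0, where 1 is the all-ones vector. -/
/-!
Sᵀ acts on each block separately. On block `b` the eigenvalue equation reads
`(λ + μ_b) v_k = μ_b v_{k-1}` (with `v_{-1} = 0`), so a nonzero block component forces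
`λ = -μ_b`, and then `μ_b v_{k-1} = 0` leaves it supported on the last index of the block.
Since the `μ_b` are distinct, `v` lives on a single coordinate, which is then `vᵀ1`.
-/

open Matrix

namespace Matrix

theorem blockDiagonal'_mulVec_apply {ι R : Type*} [Fintype ι] [DecidableEq ι]
    {m n : ι → Type*} [∀ i, Fintype (n i)] [NonUnitalNonAssocSemiring R]
    (M : ∀ i, Matrix (m i) (n i) R) (v : (Σ i, n i) → R) (b : ι) (j : m b) :
    (blockDiagonal' M *ᵥ v) ⟨b, j⟩ = (M b *ᵥ fun i => v ⟨b, i⟩) j := by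
  simp only [mulVec, dotProduct, ← Finset.univ_sigma_univ, Finset.sum_sigma]
  rw [Finset.sum_eq_single b]
  · simp [blockDiagonal'_apply_eq]
  · intro b' _ hb'
    simp [blockDiagonal'_apply_ne _ _ _ hb'.symm]
  · simp

variable {R : Type*} [CommRing R]

def bidiagonalBlock (n : ℕ) (μ : R) : Matrix (Fin n) (Fin n) R :=
  fun i j => if j = i then -μ else if (j : ℕ) = (i : ℕ) + 1 then μ else 0

theorem bidiagonalBlock_transpose_mulVec_apply_of_val_eq_zero {n : ℕ} (μ : R)
    (w : Fin n → R) {j : Fin n} (hj : (j : ℕ) = 0) :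
    ((bidiagonalBlock n μ)ᵀ *ᵥ w) j = -μ * w j := by
  simp only [mulVec, dotProduct, transpose_apply]
  rw [Finset.sum_eq_single j]
  · simp [bidiagonalBlock]
  · intro i _ hij
    simp [bidiagonalBlock, Ne.symm hij, hj]
  · simp

theorem bidiagonalBlock_transpose_mulVec_apply_of_val_eq_succ {n : ℕ} (μ : R)
    (w : Fin n → R) {i j : Fin n} (hij : (j : ℕ) = (i : ℕ) + 1) :
    ((bidiagonalBlock n μ)ᵀ *ᵥ w) j = μ * w i - μ * w j := by
  have hne : i ≠ j := by rintro rfl; omega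
  simp only [mulVec, dotProduct, transpose_apply]
  rw [Finset.sum_eq_add_of_mem i j (Finset.mem_univ _) (Finset.mem_univ _) hne]
  · simp [bidiagonalBlock, hne.symm, hij]
    ring
  · rintro k - ⟨hki, hkj⟩
    have : (k : ℕ) ≠ i := fun h => hki (Fin.ext h)
    simp [bidiagonalBlock, Ne.symm hkj]
    omega

variable [IsDomain R]

theorem eq_neg_of_bidiagonalBlock_transpose_mulVec_eq_smul {n : ℕ} {μ lam : R}
    {w : Fin n → R} (hw : w ≠ 0) (heig : (bidiagonalBlock n μ)ᵀ *ᵥ w = lam • w) :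
    lam = -μ := by
  by_contra hlam
  have hcancel : lam + μ ≠ 0 := fun h => hlam (eq_neg_of_add_eq_zero_left h)
  -- (lam + μ) w_k = μ w_{k-1}, so w vanishes by induction on k
  have hzero : ∀ k (hk : k < n), w ⟨k, hk⟩ = 0 := by
    intro k
    induction k with
    | zero =>
      intro hk
      have h := congrFun heig ⟨0, hk⟩
      rw [bidiagonalBlock_transpose_mulVec_apply_of_val_eq_zero μ w rfl] at h
      refine (mul_eq_zero.mp ?_).resolve_left hcancel
      simp only [Pi.smul_apply, smul_eq_mul] at h
      linear_combination -h
    | succ k ih =>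
      intro hk
      have h := congrFun heig ⟨k + 1, hk⟩
      rw [bidiagonalBlock_transpose_mulVec_apply_of_val_eq_succ μ w (i := ⟨k, by omega⟩) rfl,
        ih (by omega)] at h
      refine (mul_eq_zero.mp ?_).resolve_left hcancel
      simp only [Pi.smul_apply, smul_eq_mul] at h
      linear_combination -h
  exact hw (funext fun k => hzero k k.2)

theorem sum_ne_zero_of_bidiagonalBlock_transpose_mulVec_eq_smul {n : ℕ} {μ lam : R}
    (hμ : μ ≠ 0) {w : Fin n → R} (hw : w ≠ 0)
    (heig : (bidiagonalBlock n μ)ᵀ *ᵥ w = lam • w) :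
    ∑ i, w i ≠ 0 := by
  have hlam := eq_neg_of_bidiagonalBlock_transpose_mulVec_eq_smul hw heig
  -- with lam = -μ the equation at index i + 1 reads μ w_i = 0
  have hbefore : ∀ i : Fin n, (i : ℕ) + 1 < n → w i = 0 := by
    intro i hi
    have h := congrFun heig ⟨i + 1, hi⟩
    rw [bidiagonalBlock_transpose_mulVec_apply_of_val_eq_succ μ w rfl, hlam] at h
    refine (mul_eq_zero.mp ?_).resolve_left hμ
    simp only [Pi.smul_apply, smul_eq_mul] at h
    linear_combination h
  intro hsum
  refine hw (funext fun j => ?_)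
  by_cases hj : (j : ℕ) + 1 < n
  · exact hbefore j hj
  · rw [Pi.zero_apply, ← hsum, Finset.sum_eq_single j (fun i _ hij => hbefore i ?_) (by simp)]
    have := i.2
    have : (i : ℕ) ≠ j := fun h => hij (Fin.ext h)
    omega

end Matrix

theorem stmt8_general {B : ℕ} (Kb : Fin B → ℕ)
    (μ : Fin B → ℝ) (hμ : ∀ b, 0 < μ b) (hμinj : Function.Injective μ)
    (S : Matrix (Σ b, Fin (Kb b)) (Σ b, Fin (Kb b)) ℝ)
    (hSdiag : ∀ (b : Fin B) (i j : Fin (Kb b)),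
      S ⟨b, i⟩ ⟨b, j⟩ = if j = i then -μ b
        else if (j : ℕ) = (i : ℕ) + 1 then μ b else 0)
    (hSoff : ∀ (b b' : Fin B) (i : Fin (Kb b)) (j : Fin (Kb b')),
      b ≠ b' → S ⟨b, i⟩ ⟨b', j⟩ = 0)
    (v : (Σ b, Fin (Kb b)) → ℝ) (lam : ℝ) (hv : v ≠ 0)
    (heig : Sᵀ.mulVec v = lam • v) :
    ∑ i, v i ≠ 0 := by
  have hS : S = blockDiagonal' fun b => bidiagonalBlock (Kb b) (μ b) := by
    ext ⟨b, i⟩ ⟨b', j⟩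
    by_cases hb : b = b'
    · subst hb
      rw [hSdiag, blockDiagonal'_apply_eq, bidiagonalBlock]
    · rw [hSoff b b' i j hb, blockDiagonal'_apply_ne _ _ _ hb]
  have hblock : ∀ b, (bidiagonalBlock (Kb b) (μ b))ᵀ *ᵥ (fun i => v ⟨b, i⟩) =
      lam • fun i => v ⟨b, i⟩ := by
    intro b
    ext j
    rw [hS, blockDiagonal'_transpose] at heig
    simpa only [blockDiagonal'_mulVec_apply, Pi.smul_apply] using congrFun heig ⟨b, j⟩
  obtain ⟨⟨b₀, j₀⟩, hj₀⟩ := Function.ne_iff.mp hv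
  have hb₀ : (fun i => v ⟨b₀, i⟩) ≠ 0 := Function.ne_iff.mpr ⟨j₀, hj₀⟩
  have hlam := eq_neg_of_bidiagonalBlock_transpose_mulVec_eq_smul hb₀ (hblock b₀)
  have hother : ∀ b ≠ b₀, ∑ i, v ⟨b, i⟩ = 0 := by
    intro b hb
    have hvb : (fun i => v ⟨b, i⟩) = 0 := by
      by_contra hvb
      have := eq_neg_of_bidiagonalBlock_transpose_mulVec_eq_smul hvb (hblock b)
      exact hb (hμinj (neg_injective (this.symm.trans hlam)))
    simp [hvb]
  rw [Fintype.sum_sigma, Finset.sum_eq_single b₀ (fun b _ hb => hother b hb) (by simp)]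
  exact sum_ne_zero_of_bidiagonalBlock_transpose_mulVec_eq_smul (hμ b₀).ne' hb₀ (hblock b₀)

theorem stmt8 {B : ℕ} (Kb : Fin B → ℕ) (hKb : ∀ b, 0 < Kb b)
    (μ : Fin B → ℝ) (hμ : ∀ b, 0 < μ b) (hμinj : Function.Injective μ)
    (S : Matrix (Σ b, Fin (Kb b)) (Σ b, Fin (Kb b)) ℝ)
    (hSdiag : ∀ (b : Fin B) (i j : Fin (Kb b)),
      S ⟨b, i⟩ ⟨b, j⟩ = if j = i then -μ b
        else if (j : ℕ) = (i : ℕ) + 1 then μ b else 0)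
    (hSoff : ∀ (b b' : Fin B) (i : Fin (Kb b)) (j : Fin (Kb b')),
      b ≠ b' → S ⟨b, i⟩ ⟨b', j⟩ = 0)
    (v : (Σ b, Fin (Kb b)) → ℝ) (lam : ℝ) (hv : v ≠ 0)
    (heig : Sᵀ.mulVec v = lam • v) :
    ∑ i, v i ≠ 0 :=
  stmt8_general Kb μ hμ hμinj S hSdiag hSoff v lam hv heig
end

section
/- Let S be a K×K real matrix as above (block diagonal with bidiagonal blocks of distinct negative rates). Then the pair (S, 1) is controllable: there is no nonzero vector y ∈ ℝ^K with yᵀ exp(Sσ) 1 = 0 for all σ ≥ 0. Equivalently, the only y with yᵀ S^j 1 = 0 for all j = 0, 1, ..., K−1 is y = 0. -/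
/-!
Controllability of `(S, 1)` is reduced to the Krylov condition `yᵀ Sʲ 1 = 0` for all `j`: for the
exponential by differentiating `t ↦ yᵀ Sʲ exp(tS) 1` on `[0, ∞)`, for `j < K` by Cayley–Hamilton.
Given the Krylov condition, `yᵀ p(S) 1 = 0` for every polynomial `p`. To isolate block `b`, take
`p = q · (X + μ_b)ᵐ` with `q = ∏_{b' ≠ b} (X + μ_{b'})^{K_{b'}}`: the factor `q` annihilates every
other block, and is invertible on block `b` because `S^{(b)} + μ_b = μ_b N` with `N` the nilpotent
shift and `q(-μ_b) ≠ 0` by distinctness of the rates. Hence `z = y_bᵀ q(S^{(b)})` satisfies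
`z Nᵐ 1 = 0` for all `m`; the vectors `Nᵐ 1` are the indicators of initial segments, so `z = 0`,
and then `y_b = 0`.
-/

open Matrix Polynomial

section AnnihilatedPowers

variable {R A M : Type*} [CommRing R] [Ring A] [Algebra R A] [AddCommGroup M] [Module R M]
  (L : A →ₗ[R] M) {a : A}

theorem LinearMap.map_aeval_eq_zero {p : R[X]} (h : ∀ i, p.coeff i ≠ 0 → L (a ^ i) = 0) :
    L (aeval a p) = 0 := by
  rw [aeval_eq_sum_range, map_sum]
  refine Finset.sum_eq_zero fun i _ => ?_
  by_cases hi : p.coeff i = 0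
  · rw [hi, zero_smul, map_zero]
  · rw [map_smul, h i hi, smul_zero]

theorem LinearMap.map_pow_eq_zero_of_lt_natDegree {P : R[X]} (hP : P.Monic) (ha : aeval a P = 0)
    (h : ∀ j < P.natDegree, L (a ^ j) = 0) (j : ℕ) : L (a ^ j) = 0 := by
  rcases eq_or_ne P 1 with rfl | hP1
  · rw [map_one] at ha
    rw [← mul_one (a ^ j), ha, mul_zero, map_zero]
  rw [← aeval_X_pow (R := R), ← aeval_modByMonic_eq_self_of_root ha]
  exact L.map_aeval_eq_zero fun i hi =>
    h i ((le_natDegree_of_ne_zero hi).trans_lt (natDegree_modByMonic_lt _ hP hP1))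

end AnnihilatedPowers

theorem ContinuousLinearMap.map_pow_eq_zero_of_map_exp_smul {𝔸 F : Type*} [NormedRing 𝔸]
    [NormedAlgebra ℝ 𝔸] [CompleteSpace 𝔸] [NormedAddCommGroup F] [NormedSpace ℝ F]
    (L : 𝔸 →L[ℝ] F) {a : 𝔸} (h : ∀ t : ℝ, 0 ≤ t → L (NormedSpace.exp (t • a)) = 0) (j : ℕ) :
    L (a ^ j) = 0 := by
  set g : ℕ → ℝ → F := fun j t => L (a ^ j * NormedSpace.exp (t • a))
  have hderiv (j : ℕ) (t : ℝ) : HasDerivAt (g j) (g (j + 1) t) t := by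
    have := L.hasFDerivAt.comp_hasDerivAt t ((hasDerivAt_exp_smul_const' a t).const_mul (a ^ j))
    rwa [← mul_assoc, ← pow_succ] at this
  have hg (j : ℕ) : ∀ t ∈ Set.Ici (0 : ℝ), g j t = 0 := by
    induction j with
    | zero => simpa [g] using h
    | succ j ih =>
      intro t ht
      refine (uniqueDiffOn_Ici 0 t ht).eq_deriv _ (hderiv j t).hasDerivWithinAt ?_
      exact (hasDerivWithinAt_const t _ 0).congr ih (ih t ht)
  simpa [g] using hg j 0 Set.self_mem_Ici

theorem isUnit_aeval_of_isNilpotent_sub_algebraMap {K A : Type*} [Field K] [Ring A] [Algebra K A]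
    {a : A} {c : K} (ha : IsNilpotent (a - algebraMap K A c)) {p : K[X]} (hp : p.eval c ≠ 0) :
    IsUnit (aeval a p) := by
  obtain ⟨r, hr⟩ := X_sub_C_dvd_sub_C_eval (a := c) (p := p)
  have hsplit : aeval a p = algebraMap K A (p.eval c) + aeval a (X - C c) * aeval a r := by
    conv_lhs => rw [eq_add_of_sub_eq' hr, map_add, map_mul, aeval_C]
  rw [hsplit]
  refine IsNilpotent.isUnit_add_left_of_commute ?_ (hp.isUnit.map _) (Algebra.commutes _ _).symm
  refine ((Commute.all (X - C c) r).map (aeval a)).isNilpotent_mul_right ?_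
  simpa using ha

namespace Matrix

section DotProductMulVec

variable {R m n : Type*} [CommRing R] [Fintype m] [Fintype n]

def dotProductMulVecLinearMap (y : m → R) (w : n → R) : Matrix m n R →ₗ[R] R where
  toFun M := y ⬝ᵥ M *ᵥ w
  map_add' _ _ := by rw [add_mulVec, dotProduct_add]
  map_smul' _ _ := by rw [smul_mulVec, dotProduct_smul]; rfl

variable [DecidableEq n] {A : Matrix n n R} {y w : n → R}

theorem dotProduct_aeval_mulVec_eq_zero (h : ∀ j, y ⬝ᵥ (A ^ j) *ᵥ w = 0) (p : R[X]) :
    y ⬝ᵥ aeval A p *ᵥ w = 0 :=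
  (dotProductMulVecLinearMap y w).map_aeval_eq_zero fun i _ => h i

theorem dotProduct_pow_mulVec_eq_zero_of_lt_card (h : ∀ j < Fintype.card n, y ⬝ᵥ (A ^ j) *ᵥ w = 0)
    (j : ℕ) : y ⬝ᵥ (A ^ j) *ᵥ w = 0 := by
  nontriviality R
  exact (dotProductMulVecLinearMap y w).map_pow_eq_zero_of_lt_natDegree A.charpoly_monic
    A.aeval_self_charpoly (by rwa [charpoly_natDegree_eq_dim]) j

end DotProductMulVec

theorem dotProduct_pow_mulVec_eq_zero_of_exp {n : Type*} [Fintype n] [DecidableEq n]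
    {A : Matrix n n ℝ} {y w : n → ℝ}
    (h : ∀ t : ℝ, 0 ≤ t → y ⬝ᵥ NormedSpace.exp (t • A) *ᵥ w = 0) (j : ℕ) :
    y ⬝ᵥ (A ^ j) *ᵥ w = 0 := by
  open scoped Matrix.Norms.Operator in
  exact (dotProductMulVecLinearMap y w).toContinuousLinearMap.map_pow_eq_zero_of_map_exp_smul h j

section BlockDiagonal

variable {ι R : Type*} {m : ι → Type*} [Fintype ι] [DecidableEq ι] [∀ i, Fintype (m i)]

theorem dotProduct_blockDiagonal'_mulVec [CommSemiring R] (M : ∀ i, Matrix (m i) (m i) R)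
    (y w : (Σ i, m i) → R) :
    y ⬝ᵥ blockDiagonal' M *ᵥ w = ∑ i, (fun a => y ⟨i, a⟩) ⬝ᵥ M i *ᵥ fun a => w ⟨i, a⟩ := by
  simp [dotProduct, mulVec, Fintype.sum_sigma, blockDiagonal'_apply]

variable [∀ i, DecidableEq (m i)]

def blockDiagonal'AlgHom (R : Type*) [CommSemiring R] :
    (∀ i, Matrix (m i) (m i) R) →ₐ[R] Matrix (Σ i, m i) (Σ i, m i) R :=
  { blockDiagonal'RingHom m R with
    commutes' r := by simp [Algebra.algebraMap_eq_smul_one, blockDiagonal'_smul] }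

theorem aeval_blockDiagonal' [CommSemiring R] (M : ∀ i, Matrix (m i) (m i) R) (p : R[X]) :
    aeval (blockDiagonal' M) p = blockDiagonal' fun i => aeval (M i) p := by
  rw [← aeval_pi_apply]
  exact aeval_algHom_apply (blockDiagonal'AlgHom R) M p

theorem dotProduct_aeval_mul_mulVec_eq_zero_of_blockDiagonal' [CommSemiring R]
    {M : ∀ i, Matrix (m i) (m i) R} {y w : (Σ i, m i) → R}
    (h : ∀ p : R[X], y ⬝ᵥ aeval (blockDiagonal' M) p *ᵥ w = 0) {i : ι} {q : R[X]}
    (hq : ∀ j ≠ i, aeval (M j) q = 0) (p : R[X]) :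
    (fun a => y ⟨i, a⟩) ⬝ᵥ aeval (M i) (q * p) *ᵥ (fun a => w ⟨i, a⟩) = 0 := by
  have hqp := h (q * p)
  rwa [aeval_blockDiagonal', dotProduct_blockDiagonal'_mulVec,
    Fintype.sum_eq_single i fun j hj => by
      rw [map_mul, hq j hj, zero_mul, zero_mulVec, dotProduct_zero]] at hqp

end BlockDiagonal

section Shift

variable {R : Type*}

def shiftMatrix [Zero R] [One R] (k : ℕ) : Matrix (Fin k) (Fin k) R :=
  of fun i j => if (j : ℕ) = i + 1 then 1 else 0

variable [Semiring R] {k : ℕ}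

theorem shiftMatrix_mulVec_apply (v : Fin k → R) (i : Fin k) :
    (shiftMatrix k *ᵥ v) i = if h : (i : ℕ) + 1 < k then v ⟨i + 1, h⟩ else 0 := by
  simp only [mulVec, dotProduct, shiftMatrix, of_apply, ite_mul, one_mul, zero_mul]
  split_ifs with h
  · rw [Fintype.sum_eq_single ⟨i + 1, h⟩ fun j hj => if_neg fun h' => hj (Fin.ext h'), if_pos rfl]
  · exact Finset.sum_eq_zero fun j _ => if_neg (by have := j.isLt; omega)

theorem shiftMatrix_pow_mulVec_apply (m : ℕ) (v : Fin k → R) (i : Fin k) :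
    (shiftMatrix k ^ m *ᵥ v) i = if h : (i : ℕ) + m < k then v ⟨i + m, h⟩ else 0 := by
  induction m generalizing i with
  | zero => simp
  | succ m ih =>
    simp only [pow_succ', ← mulVec_mulVec, shiftMatrix_mulVec_apply, ih]
    split_ifs <;> first | rfl | omega | (congr 2; omega)

theorem shiftMatrix_pow_self : shiftMatrix k ^ k = (0 : Matrix (Fin k) (Fin k) R) := by
  refine ext_of_mulVec_single fun j => funext fun i => ?_
  rw [shiftMatrix_pow_mulVec_apply, dif_neg (by omega), zero_mulVec]
  rfl

theorem eq_zero_of_forall_dotProduct_shiftMatrix_pow_mulVec_one {R : Type*} [Ring R] {z : Fin k → R}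
    (h : ∀ m, z ⬝ᵥ (shiftMatrix k ^ m) *ᵥ 1 = 0) : z = 0 := by
  funext i
  have hsingle : shiftMatrix k ^ (k - 1 - i) *ᵥ 1 - shiftMatrix k ^ (k - i) *ᵥ 1 =
      (Pi.single i 1 : Fin k → R) := by
    funext j
    simp only [Pi.sub_apply, shiftMatrix_pow_mulVec_apply, Pi.one_apply, Pi.single_apply]
    split_ifs <;> simp_all [Fin.ext_iff] <;> omega
  rw [← mul_one (z i), ← dotProduct_single, ← hsingle, dotProduct_sub, h, h, sub_zero]
  rfl

end Shift

section Erlang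

variable {K : Type*} [Field K] {k : ℕ}

def erlangBlock (k : ℕ) (μ : K) : Matrix (Fin k) (Fin k) K :=
  μ • (shiftMatrix k - 1)

theorem erlangBlock_apply (μ : K) (i j : Fin k) :
    erlangBlock k μ i j = if j = i then -μ else if (j : ℕ) = i + 1 then μ else 0 := by
  simp only [erlangBlock, smul_apply, sub_apply, shiftMatrix, of_apply, one_apply, smul_eq_mul]
  by_cases hij : j = i
  · subst hij
    simp
  · rw [if_neg hij, if_neg (Ne.symm hij)]
    split_ifs <;> ring

theorem aeval_erlangBlock_X_add_C (μ : K) :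
    aeval (erlangBlock k μ) (X + C μ) = μ • shiftMatrix k := by
  simp [erlangBlock, Algebra.algebraMap_eq_smul_one, smul_sub]

theorem aeval_erlangBlock_X_add_C_pow_self (μ : K) :
    aeval (erlangBlock k μ) ((X + C μ) ^ k) = 0 := by
  rw [map_pow, aeval_erlangBlock_X_add_C, _root_.smul_pow, shiftMatrix_pow_self, smul_zero]

theorem isUnit_aeval_erlangBlock (μ : K) {p : K[X]} (hp : p.eval (-μ) ≠ 0) :
    IsUnit (aeval (erlangBlock k μ) p) := by
  refine isUnit_aeval_of_isNilpotent_sub_algebraMap ?_ hp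
  have : erlangBlock k μ - algebraMap K _ (-μ) = μ • shiftMatrix k := by
    simpa using aeval_erlangBlock_X_add_C (k := k) μ
  rw [this, ← aeval_erlangBlock_X_add_C]
  exact ⟨k, by rw [← map_pow, aeval_erlangBlock_X_add_C_pow_self]⟩

theorem eq_zero_of_forall_dotProduct_aeval_erlangBlock_mulVec_one {μ : K} (hμ : μ ≠ 0)
    {z : Fin k → K} (h : ∀ p : K[X], z ⬝ᵥ aeval (erlangBlock k μ) p *ᵥ 1 = 0) : z = 0 := by
  refine eq_zero_of_forall_dotProduct_shiftMatrix_pow_mulVec_one fun m => ?_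
  have := h ((X + C μ) ^ m)
  rwa [map_pow, aeval_erlangBlock_X_add_C, _root_.smul_pow, smul_mulVec, dotProduct_smul,
    smul_eq_mul, mul_eq_zero, or_iff_right (pow_ne_zero m hμ)] at this

end Erlang

section ErlangGenerator

variable {ι K : Type*} [Fintype ι] [DecidableEq ι] [Field K]

def erlangGenerator (k : ι → ℕ) (μ : ι → K) : Matrix (Σ i, Fin (k i)) (Σ i, Fin (k i)) K :=
  blockDiagonal' fun i => erlangBlock (k i) (μ i)

theorem eq_zero_of_forall_dotProduct_erlangGenerator_pow_mulVec_one {k : ι → ℕ} {μ : ι → K}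
    (hμ : ∀ i, μ i ≠ 0) (hinj : Function.Injective μ) {y : (Σ i, Fin (k i)) → K}
    (h : ∀ j, y ⬝ᵥ (erlangGenerator k μ ^ j) *ᵥ 1 = 0) : y = 0 := by
  ext ⟨i, a⟩
  set q : K[X] := ∏ j ∈ Finset.univ.erase i, (X + C (μ j)) ^ k j with hq_def
  have hq : ∀ j ≠ i, aeval (erlangBlock (k j) (μ j)) q = 0 := fun j hj => by
    rw [hq_def, ← Finset.mul_prod_erase _ _ (Finset.mem_erase.2 ⟨hj, Finset.mem_univ j⟩), map_mul,
      aeval_erlangBlock_X_add_C_pow_self, zero_mul]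
  have hQ : IsUnit (aeval (erlangBlock (k i) (μ i)) q) := by
    refine isUnit_aeval_erlangBlock _ ?_
    rw [eval_prod, Finset.prod_ne_zero_iff]
    intro j hj
    rw [eval_pow, eval_add, eval_X, eval_C, neg_add_eq_sub]
    exact pow_ne_zero _ (sub_ne_zero.2 fun h => Finset.ne_of_mem_erase hj (hinj h))
  have hyQ : (fun a => y ⟨i, a⟩) ᵥ* aeval (erlangBlock (k i) (μ i)) q = 0 :=
    eq_zero_of_forall_dotProduct_aeval_erlangBlock_mulVec_one (hμ i) fun p => by
      rw [← dotProduct_mulVec, mulVec_mulVec, ← map_mul]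
      exact dotProduct_aeval_mul_mulVec_eq_zero_of_blockDiagonal'
        (dotProduct_aeval_mulVec_eq_zero h) hq p
  exact congrFun (vecMul_injective_of_isUnit hQ (hyQ.trans (zero_vecMul _).symm)) a

end ErlangGenerator

end Matrix

theorem stmt9_general {B : ℕ} (Kb : Fin B → ℕ)
    (μ : Fin B → ℝ) (hμ : ∀ b, 0 < μ b) (hμinj : Function.Injective μ)
    (S : Matrix (Σ b, Fin (Kb b)) (Σ b, Fin (Kb b)) ℝ)
    (hSdiag : ∀ (b : Fin B) (i j : Fin (Kb b)),
      S ⟨b, i⟩ ⟨b, j⟩ = if j = i then -μ b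
        else if (j : ℕ) = (i : ℕ) + 1 then μ b else 0)
    (hSoff : ∀ (b b' : Fin B) (i : Fin (Kb b)) (j : Fin (Kb b')),
      b ≠ b' → S ⟨b, i⟩ ⟨b', j⟩ = 0) :
    (∀ y : (Σ b, Fin (Kb b)) → ℝ,
      (∀ σ : ℝ, 0 ≤ σ →
        y ⬝ᵥ (NormedSpace.exp (σ • S)).mulVec (fun _ => 1) = 0) → y = 0) ∧
    (∀ y : (Σ b, Fin (Kb b)) → ℝ,
      (∀ j < Fintype.card (Σ b, Fin (Kb b)),
        y ⬝ᵥ (S ^ j).mulVec (fun _ => 1) = 0) → y = 0) := by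
  have hS : S = erlangGenerator Kb μ := by
    ext ⟨b, i⟩ ⟨b', j⟩
    by_cases hb : b = b'
    · subst hb
      rw [hSdiag, erlangGenerator, blockDiagonal'_apply_eq, erlangBlock_apply]
    · rw [hSoff b b' i j hb, erlangGenerator, blockDiagonal'_apply_ne _ _ _ hb]
  have hcontrollable (y : (Σ b, Fin (Kb b)) → ℝ) :=
    eq_zero_of_forall_dotProduct_erlangGenerator_pow_mulVec_one (fun b => (hμ b).ne') hμinj (y := y)
  subst hS
  exact ⟨fun y hy => hcontrollable y (dotProduct_pow_mulVec_eq_zero_of_exp hy),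
    fun y hy => hcontrollable y (dotProduct_pow_mulVec_eq_zero_of_lt_card hy)⟩

theorem stmt9 {B : ℕ} (Kb : Fin B → ℕ) (hKb : ∀ b, 0 < Kb b)
    (μ : Fin B → ℝ) (hμ : ∀ b, 0 < μ b) (hμinj : Function.Injective μ)
    (S : Matrix (Σ b, Fin (Kb b)) (Σ b, Fin (Kb b)) ℝ)
    (hSdiag : ∀ (b : Fin B) (i j : Fin (Kb b)),
      S ⟨b, i⟩ ⟨b, j⟩ = if j = i then -μ b
        else if (j : ℕ) = (i : ℕ) + 1 then μ b else 0)
    (hSoff : ∀ (b b' : Fin B) (i : Fin (Kb b)) (j : Fin (Kb b')),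
      b ≠ b' → S ⟨b, i⟩ ⟨b', j⟩ = 0) :
    (∀ y : (Σ b, Fin (Kb b)) → ℝ,
      (∀ σ : ℝ, 0 ≤ σ →
        y ⬝ᵥ (NormedSpace.exp (σ • S)).mulVec (fun _ => 1) = 0) → y = 0) ∧
    (∀ y : (Σ b, Fin (Kb b)) → ℝ,
      (∀ j < Fintype.card (Σ b, Fin (Kb b)),
        y ⬝ᵥ (S ^ j).mulVec (fun _ => 1) = 0) → y = 0) :=
  stmt9_general Kb μ hμ hμinj S hSdiag hSoff
end
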